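/- arXiv:2502.09376 — 4 statements merged into one kernel-verified Lean document; each statement's English description precedes it below -/
import Mathlib

section
/- Let A ∈ ℝ^{m×r} and B ∈ ℝ^{n×r} be matrices satisfying AᵀA = BᵀB. Then there exists an orthonormal matrix W ∈ ℝ^{r×r} (WᵀW = I) such that A = U Σ^{1/2} Wᵀ and B = V Σ^{1/2} Wᵀ, where U Σ Vᵀ is a compact singular value decomposition of ABᵀ. -/
open Matrix BigOperators

/-- Frobenius norm of a real matrix. -/
noncomputable def frob {m n : ℕ} (X : Matrix (Fin m) (Fin n) ℝ) : ℝ :=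
  Real.sqrt (∑ i, ∑ j, (X i j) ^ 2)

/-- Frobenius (trace) inner product ⟨A,B⟩ = tr(AᵀB). -/
def mip {m n : ℕ} (A B : Matrix (Fin m) (Fin n) ℝ) : ℝ :=
  ∑ i, ∑ j, A i j * B i j

/-- Nuclear norm: sum of singular values, i.e. sum of square roots of the
eigenvalues of XᴴX. -/
noncomputable def nuc {m n : ℕ} (X : Matrix (Fin m) (Fin n) ℝ) : ℝ :=
  ∑ i, Real.sqrt ((Matrix.isHermitian_conjTranspose_mul_self X).eigenvalues i)

/-!
Diagonalize the Gram matrix: `Wᵀ (AᵀA) W = Σ` with `W` orthogonal. Since `BᵀB = AᵀA`, both `AW`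
and `BW` have pairwise orthogonal columns whose squared norms are the `σᵢ`, so each of them is
`U Σ^{1/2}` for a matrix `U` with orthonormal columns: normalize the nonzero columns and complete
them to an orthonormal family, which `r ≤ m` makes possible. Multiplying by `Wᵀ` factors `A` and
`B`, and then `ABᵀ = U Σ^{1/2} WᵀW Σ^{1/2} Vᵀ = U Σ Vᵀ`.
-/

open Module

section InnerProductSpace

variable {𝕜 E ι : Type*} [RCLike 𝕜] [NormedAddCommGroup E] [InnerProductSpace 𝕜 E]
  [FiniteDimensional 𝕜 E] [Fintype ι]

theorem Orthonormal.exists_orthonormal_extension_of_card_le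
    (hcard : Fintype.card ι ≤ finrank 𝕜 E) {v : ι → E} {s : Set ι}
    (hv : Orthonormal 𝕜 (s.domRestrict v)) :
    ∃ w : ι → E, Orthonormal 𝕜 w ∧ ∀ i ∈ s, w i = v i := by
  obtain ⟨e⟩ : Nonempty (ι ↪ Fin (finrank 𝕜 E)) :=
    Function.Embedding.nonempty_of_card_le (by simpa using hcard)
  set f := Equiv.Set.image e s e.injective
  have hv' : Orthonormal 𝕜 ((e '' s).domRestrict (Function.extend e v 0)) := by
    convert hv.comp _ f.symm.injective
    ext x
    obtain ⟨y, rfl⟩ := f.surjective x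
    simp [f, e.injective.extend_apply]
  obtain ⟨b, hb⟩ := hv'.exists_orthonormalBasis_extension_of_card_eq (by simp)
  refine ⟨b ∘ e, b.orthonormal.comp e e.injective, fun i hi => ?_⟩
  simp [hb (e i) (Set.mem_image_of_mem e hi), e.injective.extend_apply]

theorem exists_orthonormal_eq_norm_smul_of_pairwise_inner_eq_zero
    (hcard : Fintype.card ι ≤ finrank 𝕜 E) {c : ι → E}
    (hc : Pairwise fun i j => inner 𝕜 (c i) (c j) = 0) :
    ∃ w : ι → E, Orthonormal 𝕜 w ∧ ∀ i, c i = (‖c i‖ : 𝕜) • w i := by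
  set s : Set ι := {i | c i ≠ 0}
  have hu : Orthonormal 𝕜 (s.domRestrict fun i => (‖c i‖⁻¹ : 𝕜) • c i) := by
    refine ⟨fun i => norm_smul_inv_norm i.2, fun i j hij => ?_⟩
    simp [inner_smul_left, inner_smul_right, hc (Subtype.coe_ne_coe.mpr hij)]
  obtain ⟨w, hw, hwu⟩ := hu.exists_orthonormal_extension_of_card_le hcard
  refine ⟨w, hw, fun i => ?_⟩
  by_cases hi : c i = 0
  · simp [hi]
  · rw [hwu i hi, smul_inv_smul₀ (by simpa using hi)]

end InnerProductSpace

namespace Matrix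

variable {m n : Type*} [Fintype m]

theorem gram_toLp_transpose (C : Matrix m n ℝ) :
    gram ℝ (fun j => WithLp.toLp 2 (Cᵀ j)) = Cᵀ * C := by
  ext i j
  simp [gram_apply, EuclideanSpace.inner_toLp_toLp, mul_apply, dotProduct, mul_comm]

theorem exists_eq_mul_diagonal_sqrt_of_transpose_mul_self_eq_diagonal
    [Fintype n] [DecidableEq n] (hcard : Fintype.card n ≤ Fintype.card m)
    {C : Matrix m n ℝ} {σ : n → ℝ} (hC : Cᵀ * C = diagonal σ) :
    ∃ U : Matrix m n ℝ, Uᵀ * U = 1 ∧ C = U * diagonal fun i => √(σ i) := by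
  set c : n → EuclideanSpace ℝ m := fun j => WithLp.toLp 2 (Cᵀ j)
  have hgram : gram ℝ c = diagonal σ := (gram_toLp_transpose C).trans hC
  have hc : Pairwise fun i j => inner ℝ (c i) (c j) = 0 := fun i j hij => by
    simpa [gram_apply, hij] using congr_fun (congr_fun hgram i) j
  have hnorm (i : n) : ‖c i‖ = √(σ i) := by
    rw [norm_eq_sqrt_real_inner, ← gram_apply, hgram, diagonal_apply_eq]
  obtain ⟨w, hw, hcw⟩ :=
    exists_orthonormal_eq_norm_smul_of_pairwise_inner_eq_zero (by simpa using hcard) hc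
  refine ⟨of fun k j => w j k, ?_, ?_⟩
  · rw [← gram_toLp_transpose, ← gram_eq_one_iff_orthonormal.mpr hw]
    rfl
  · ext k j
    have hkj := congr_arg (· k) (hcw j)
    rw [hnorm] at hkj
    simpa [c, mul_comm] using hkj

theorem PosSemidef.exists_orthogonal_transpose_mul_mul_eq_diagonal [Fintype n] [DecidableEq n]
    {M : Matrix n n ℝ} (hM : M.PosSemidef) :
    ∃ (W : Matrix n n ℝ) (σ : n → ℝ), Wᵀ * W = 1 ∧ W * Wᵀ = 1 ∧ (∀ i, 0 ≤ σ i) ∧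
      Wᵀ * M * W = diagonal σ := by
  have hW := hM.isHermitian.eigenvectorUnitary.2
  rw [Unitary.mem_iff, star_eq_conjTranspose, conjTranspose_eq_transpose_of_trivial] at hW
  refine ⟨_, _, hW.1, hW.2, hM.eigenvalues_nonneg, ?_⟩
  simpa [star_eq_conjTranspose] using hM.isHermitian.conjStarAlgAut_star_eigenvectorUnitary

end Matrix

/-- If AᵀA = BᵀB then there is a compact SVD ABᵀ = U Σ Vᵀ and an orthonormal
matrix W with A = U Σ^{1/2} Wᵀ and B = V Σ^{1/2} Wᵀ. -/
theorem stmt0 {m n r : ℕ} (hrm : r ≤ m) (hrn : r ≤ n)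
    (A : Matrix (Fin m) (Fin r) ℝ) (B : Matrix (Fin n) (Fin r) ℝ)
    (hAB : Aᵀ * A = Bᵀ * B) :
    ∃ (U : Matrix (Fin m) (Fin r) ℝ) (V : Matrix (Fin n) (Fin r) ℝ)
      (σ : Fin r → ℝ) (W : Matrix (Fin r) (Fin r) ℝ),
      Uᵀ * U = 1 ∧ Vᵀ * V = 1 ∧ (∀ i, 0 ≤ σ i) ∧ Wᵀ * W = 1 ∧
      A * Bᵀ = U * Matrix.diagonal σ * Vᵀ ∧
      A = U * Matrix.diagonal (fun i => Real.sqrt (σ i)) * Wᵀ ∧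
      B = V * Matrix.diagonal (fun i => Real.sqrt (σ i)) * Wᵀ := by
  have hpsd : (Aᵀ * A).PosSemidef :=
    conjTranspose_eq_transpose_of_trivial A ▸ posSemidef_conjTranspose_mul_self A
  obtain ⟨W, σ, hWW, hWW', hσ, hD⟩ :=
    hpsd.exists_orthogonal_transpose_mul_mul_eq_diagonal
  have hAW : (A * W)ᵀ * (A * W) = diagonal σ := by
    rw [← hD]; simp only [transpose_mul, Matrix.mul_assoc]
  have hBW : (B * W)ᵀ * (B * W) = diagonal σ := by
    rw [← hD, hAB]; simp only [transpose_mul, Matrix.mul_assoc]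
  obtain ⟨U, hU, hAU⟩ :=
    exists_eq_mul_diagonal_sqrt_of_transpose_mul_self_eq_diagonal (by simpa) hAW
  obtain ⟨V, hV, hBV⟩ :=
    exists_eq_mul_diagonal_sqrt_of_transpose_mul_self_eq_diagonal (by simpa) hBW
  have hA : A = U * diagonal (fun i => √(σ i)) * Wᵀ := by
    rw [← hAU, Matrix.mul_assoc, hWW', Matrix.mul_one]
  have hB : B = V * diagonal (fun i => √(σ i)) * Wᵀ := by
    rw [← hBV, Matrix.mul_assoc, hWW', Matrix.mul_one]
  refine ⟨U, V, σ, W, hU, hV, hσ, hWW, ?_, hA, hB⟩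
  calc A * Bᵀ
      = U * (diagonal (fun i => √(σ i)) * (Wᵀ * W) * diagonal (fun i => √(σ i))) * Vᵀ := by
        rw [hA, hB]
        simp only [transpose_mul, transpose_transpose, diagonal_transpose, Matrix.mul_assoc]
    _ = U * diagonal σ * Vᵀ := by
        rw [hWW, Matrix.mul_one, diagonal_mul_diagonal]
        simp_rw [Real.mul_self_sqrt (hσ _)]
end

section
/- Let U ∈ ℝ^{m×r} and V ∈ ℝ^{n×r} have orthonormal columns, and let X ∈ ℝ^{m×n} satisfy XV = U and XᵀU = V. Then X = UVᵀ + Ũ Σ Ṽᵀ, where Ũ ∈ ℝ^{m×(m−r)} is an orthonormal basis of the orthogonal complement of the column space of U, Ṽ ∈ ℝ^{n×(n−r)} is an orthonormal basis of the orthogonal complement of the column space of V, and Σ ∈ ℝ^{(m−r)×(n−r)} is a rectangular diagonal matrix. -/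
/-!
Since `Uᵀ X = Vᵀ` and `X V = U`, the remainder `Y = X - U Vᵀ` satisfies `Uᵀ Y = 0` and `Y V = 0`.
Complete `U` and `V` to orthogonal matrices `[U W]` and `[V Z]`; then `Y = W (Wᵀ Y Z) Zᵀ`, and a
singular value decomposition `Wᵀ Y Z = P D Qᵀ` gives `Ũ = W P`, `Ṽ = Z Q`, `Σ = D`.

The singular value decomposition of `T : E → F` comes from an orthonormal eigenbasis `e` of `T* T`:
the images `T e_j` are pairwise orthogonal, and because the eigenvalues are sorted decreasingly they
vanish for `j ≥ rank T`. Gram–Schmidt then completes the nonzero ones, normalized, to an orthonormal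
basis `f` of `F` with `⟪f_i, T e_j⟫ = 0` whenever `i ≠ j`.
-/

open Matrix BigOperators

open Module InnerProductSpace

section

variable {𝕜 E F : Type*} [RCLike 𝕜] [NormedAddCommGroup E] [InnerProductSpace 𝕜 E]
  [NormedAddCommGroup F] [InnerProductSpace 𝕜 F]

theorem inner_gramSchmidtOrthonormalBasis_eq_zero_of_orthogonal {ι : Type*} [LinearOrder ι]
    [LocallyFiniteOrderBot ι] [WellFoundedLT ι] [Fintype ι] [FiniteDimensional 𝕜 E]
    (h : finrank 𝕜 E = Fintype.card ι) {f : ι → E} (hf : Pairwise fun i j => ⟪f i, f j⟫_𝕜 = 0)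
    {i j : ι} (hij : i ≠ j) : ⟪gramSchmidtOrthonormalBasis h f i, f j⟫_𝕜 = 0 := by
  by_cases hj : f j = 0
  · rw [hj, inner_zero_right]
  have hfj : f j = (‖f j‖ : 𝕜) • gramSchmidtOrthonormalBasis h f j := by
    rw [gramSchmidtOrthonormalBasis_apply_of_orthogonal h hf hj, smul_smul,
      mul_inv_cancel₀ (RCLike.ofReal_ne_zero.mpr (norm_ne_zero_iff.mpr hj)), one_smul]
  rw [hfj, inner_smul_right, (gramSchmidtOrthonormalBasis h f).orthonormal.2 hij, mul_zero]

namespace LinearMap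

variable [FiniteDimensional 𝕜 E] [FiniteDimensional 𝕜 F] (T : E →ₗ[𝕜] F) {q : ℕ}

theorem inner_apply_eigenvectorBasis_adjoint_comp_self (hq : finrank 𝕜 E = q) (i j : Fin q) :
    ⟪T (T.isSymmetric_adjoint_comp_self.eigenvectorBasis hq i),
      T (T.isSymmetric_adjoint_comp_self.eigenvectorBasis hq j)⟫_𝕜 =
      if i = j then (T.isSymmetric_adjoint_comp_self.eigenvalues hq j : 𝕜) else 0 := by
  rw [← adjoint_inner_right, ← comp_apply, IsSymmetric.apply_eigenvectorBasis, inner_smul_right,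
    orthonormal_iff_ite.mp (OrthonormalBasis.orthonormal _), mul_ite, mul_one, mul_zero]

theorem lt_finrank_range_of_apply_eigenvectorBasis_adjoint_comp_self_ne_zero
    (hq : finrank 𝕜 E = q) {j : Fin q}
    (hj : T (T.isSymmetric_adjoint_comp_self.eigenvectorBasis hq j) ≠ 0) :
    (j : ℕ) < finrank 𝕜 (range T) := by
  rw [← singularValues_pos_iff_lt_finrank_range, singularValues_pos_iff_ne_zero]
  intro hσ
  have heig := T.sq_singularValues_fin hq j
  rw [hσ, zero_pow two_ne_zero] at heig
  have := T.inner_apply_eigenvectorBasis_adjoint_comp_self hq j j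
  rw [if_pos rfl, ← heig, RCLike.ofReal_zero, inner_self_eq_zero] at this
  exact hj this

theorem exists_orthonormalBasis_inner_apply_eq_zero (hq : finrank 𝕜 E = q) {p : ℕ}
    (hp : finrank 𝕜 F = p) :
    ∃ (e : OrthonormalBasis (Fin q) 𝕜 E) (f : OrthonormalBasis (Fin p) 𝕜 F),
      ∀ (i : Fin p) (j : Fin q), (i : ℕ) ≠ j → ⟪f i, T (e j)⟫_𝕜 = 0 := by
  set e := T.isSymmetric_adjoint_comp_self.eigenvectorBasis hq
  let v : Fin p → F := fun i => if h : (i : ℕ) < q then T (e ⟨i, h⟩) else 0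
  have hv : Pairwise fun i j => ⟪v i, v j⟫_𝕜 = 0 := by
    intro i j hij
    simp only [v]
    split_ifs with hi hj
    · rw [T.inner_apply_eigenvectorBasis_adjoint_comp_self hq, if_neg]
      exact fun h => hij (Fin.ext (Fin.mk.inj h))
    all_goals simp
  refine ⟨e, gramSchmidtOrthonormalBasis (hp.trans (Fintype.card_fin p).symm) v,
    fun i j hij => ?_⟩
  by_cases hj : (j : ℕ) < p
  · have hvj : T (e j) = v ⟨j, hj⟩ := by simp [v]
    rw [hvj]
    exact inner_gramSchmidtOrthonormalBasis_eq_zero_of_orthogonal _ hv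
      (fun h => hij (congrArg Fin.val h))
  · have hTej : T (e j) = 0 := by
      by_contra hne
      have := T.lt_finrank_range_of_apply_eigenvectorBasis_adjoint_comp_self_ne_zero hq hne
      have := (range T).finrank_le
      omega
    rw [hTej, inner_zero_right]

end LinearMap

namespace Matrix

def IsRectDiagonal {α : Type*} [Zero α] {p q : ℕ} (D : Matrix (Fin p) (Fin q) α) : Prop :=
  ∀ (i : Fin p) (j : Fin q), (i : ℕ) ≠ j → D i j = 0

theorem exists_orthonormal_completion {m r : ℕ} {U : Matrix (Fin m) (Fin r) 𝕜}
    (hU : Uᴴ * U = 1) :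
    ∃ W : Matrix (Fin m) (Fin (m - r)) 𝕜, Wᴴ * W = 1 ∧ Wᴴ * U = 0 ∧ U * Uᴴ + W * Wᴴ = 1 := by
  let u : Fin r → EuclideanSpace 𝕜 (Fin m) := fun i => WithLp.toLp 2 (Uᵀ i)
  have hu : Orthonormal 𝕜 u := by
    rw [orthonormal_iff_ite]
    intro i j
    rw [← one_apply, ← hU]
    simp [u, EuclideanSpace.inner_toLp_toLp, mul_apply, dotProduct, mul_comm]
  have hrm : r ≤ m := by
    simpa using hu.linearIndependent.fintype_card_le_finrank
  have hcard : finrank 𝕜 (EuclideanSpace 𝕜 (Fin m)) = Fintype.card (Fin r ⊕ Fin (m - r)) := by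
    simp only [finrank_euclideanSpace_fin, Fintype.card_sum, Fintype.card_fin]; omega
  have hinl : Orthonormal 𝕜
      ((Set.range (Sum.inl : Fin r → Fin r ⊕ Fin (m - r))).domRestrict (Sum.elim u 0)) := by
    rw [orthonormal_iff_ite]
    rintro ⟨_, i, rfl⟩ ⟨_, j, rfl⟩
    simp [orthonormal_iff_ite.mp hu i j, Subtype.ext_iff]
  obtain ⟨B, hB⟩ := hinl.exists_orthonormalBasis_extension_of_card_eq hcard
  set M := (EuclideanSpace.basisFun (Fin m) 𝕜).toBasis.toMatrix B
  set W : Matrix (Fin m) (Fin (m - r)) 𝕜 := of fun a i => B (Sum.inr i) a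
  have hM : M = fromCols U W := by
    ext a (i | i)
    · simp [M, Basis.toMatrix_apply, hB (Sum.inl i) ⟨i, rfl⟩, u]
    · simp [M, W, Basis.toMatrix_apply]
  have hMM : Mᴴ * M = 1 :=
    (EuclideanSpace.basisFun _ 𝕜).toMatrix_orthonormalBasis_conjTranspose_mul_self B
  have hMM' : M * Mᴴ = 1 :=
    (EuclideanSpace.basisFun _ 𝕜).toMatrix_orthonormalBasis_self_mul_conjTranspose B
  rw [hM, conjTranspose_fromCols_eq_fromRows_conjTranspose] at hMM hMM'
  rw [fromRows_mul_fromCols, ← fromBlocks_one, fromBlocks_inj] at hMM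
  rw [fromCols_mul_fromRows] at hMM'
  exact ⟨W, hMM.2.2.2, hMM.2.2.1, hMM'⟩

theorem exists_singularValueDecomposition {p q : ℕ} (A : Matrix (Fin p) (Fin q) 𝕜) :
    ∃ P ∈ unitaryGroup (Fin p) 𝕜, ∃ Q ∈ unitaryGroup (Fin q) 𝕜,
      ∃ D : Matrix (Fin p) (Fin q) 𝕜, D.IsRectDiagonal ∧ A = P * D * Qᴴ := by
  obtain ⟨e, f, hef⟩ := (toEuclideanLin A).exists_orthonormalBasis_inner_apply_eq_zero
    finrank_euclideanSpace_fin finrank_euclideanSpace_fin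
  set P := (EuclideanSpace.basisFun (Fin p) 𝕜).toBasis.toMatrix f
  set Q := (EuclideanSpace.basisFun (Fin q) 𝕜).toBasis.toMatrix e
  have hP : P ∈ unitaryGroup (Fin p) 𝕜 :=
    OrthonormalBasis.toMatrix_orthonormalBasis_mem_unitary _ f
  have hQ : Q ∈ unitaryGroup (Fin q) 𝕜 :=
    OrthonormalBasis.toMatrix_orthonormalBasis_mem_unitary _ e
  refine ⟨P, hP, Q, hQ, Pᴴ * A * Q, fun i j hij => ?_, ?_⟩
  · rw [← hef i j hij]
    simp only [P, Q, mul_apply, conjTranspose_apply, Basis.toMatrix_apply,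
      OrthonormalBasis.coe_toBasis_repr_apply, EuclideanSpace.basisFun_repr,
      EuclideanSpace.inner_eq_star_dotProduct, ofLp_toLpLin,
      toLin'_apply, dotProduct, mulVec, Finset.sum_mul, Pi.star_apply]
    rw [Finset.sum_comm]
    exact Finset.sum_congr rfl fun _ _ => Finset.sum_congr rfl fun _ _ => by ring
  · have hPP : P * Pᴴ = 1 := by simpa [star_eq_conjTranspose] using mem_unitaryGroup_iff.mp hP
    have hQQ : Q * Qᴴ = 1 := by simpa [star_eq_conjTranspose] using mem_unitaryGroup_iff.mp hQ
    rw [← Matrix.mul_assoc, ← Matrix.mul_assoc, hPP, Matrix.one_mul, Matrix.mul_assoc, hQQ,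
      Matrix.mul_one]

theorem exists_complement_singularValueDecomposition {m n r s : ℕ}
    {U : Matrix (Fin m) (Fin r) 𝕜} {V : Matrix (Fin n) (Fin s) 𝕜} {Y : Matrix (Fin m) (Fin n) 𝕜}
    (hU : Uᴴ * U = 1) (hV : Vᴴ * V = 1) (hUY : Uᴴ * Y = 0) (hYV : Y * V = 0) :
    ∃ (Ut : Matrix (Fin m) (Fin (m - r)) 𝕜) (Vt : Matrix (Fin n) (Fin (n - s)) 𝕜)
      (S : Matrix (Fin (m - r)) (Fin (n - s)) 𝕜),
      Utᴴ * Ut = 1 ∧ Utᴴ * U = 0 ∧ Vtᴴ * Vt = 1 ∧ Vtᴴ * V = 0 ∧ S.IsRectDiagonal ∧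
      Y = Ut * S * Vtᴴ := by
  obtain ⟨W, hWW, hWU, hUW⟩ := exists_orthonormal_completion hU
  obtain ⟨Z, hZZ, hZV, hVZ⟩ := exists_orthonormal_completion hV
  have hWWY : W * Wᴴ * Y = Y := calc
    W * Wᴴ * Y = (U * Uᴴ + W * Wᴴ) * Y := by
      rw [Matrix.add_mul, Matrix.mul_assoc U, hUY, Matrix.mul_zero, zero_add]
    _ = Y := by rw [hUW, Matrix.one_mul]
  have hYZZ : Y * (Z * Zᴴ) = Y := calc
    Y * (Z * Zᴴ) = Y * (V * Vᴴ + Z * Zᴴ) := by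
      rw [Matrix.mul_add, ← Matrix.mul_assoc Y V, hYV, Matrix.zero_mul, zero_add]
    _ = Y := by rw [hVZ, Matrix.mul_one]
  obtain ⟨P, hP, Q, hQ, D, hD, hSVD⟩ := exists_singularValueDecomposition (Wᴴ * Y * Z)
  have hPP : Pᴴ * P = 1 := by simpa [star_eq_conjTranspose] using mem_unitaryGroup_iff'.mp hP
  have hQQ : Qᴴ * Q = 1 := by simpa [star_eq_conjTranspose] using mem_unitaryGroup_iff'.mp hQ
  refine ⟨W * P, Z * Q, D, ?_, ?_, ?_, ?_, hD, ?_⟩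
  · rw [conjTranspose_mul, Matrix.mul_assoc, ← Matrix.mul_assoc Wᴴ, hWW, Matrix.one_mul, hPP]
  · rw [conjTranspose_mul, Matrix.mul_assoc, hWU, Matrix.mul_zero]
  · rw [conjTranspose_mul, Matrix.mul_assoc, ← Matrix.mul_assoc Zᴴ, hZZ, Matrix.one_mul, hQQ]
  · rw [conjTranspose_mul, Matrix.mul_assoc, hZV, Matrix.mul_zero]
  · calc Y = W * (Wᴴ * Y * Z) * Zᴴ := by
          simp only [← Matrix.mul_assoc] at hWWY ⊢
          rw [hWWY, Matrix.mul_assoc, hYZZ]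
      _ = W * P * D * (Z * Q)ᴴ := by
          rw [hSVD]; simp only [conjTranspose_mul, Matrix.mul_assoc]

end Matrix

end

/-- If XV = U and XᵀU = V for orthonormal-column U, V, then
X = UVᵀ + Ũ Σ Ṽᵀ with Ũ, Ṽ orthonormal bases of the orthogonal complements
and Σ rectangular diagonal. -/
theorem stmt1 {m n r : ℕ}
    (U : Matrix (Fin m) (Fin r) ℝ) (V : Matrix (Fin n) (Fin r) ℝ)
    (X : Matrix (Fin m) (Fin n) ℝ)
    (hU : Uᵀ * U = 1) (hV : Vᵀ * V = 1)
    (hXV : X * V = U) (hXU : Xᵀ * U = V) :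
    ∃ (Ut : Matrix (Fin m) (Fin (m - r)) ℝ) (Vt : Matrix (Fin n) (Fin (n - r)) ℝ)
      (S : Matrix (Fin (m - r)) (Fin (n - r)) ℝ),
      Utᵀ * Ut = 1 ∧ Utᵀ * U = 0 ∧ Vtᵀ * Vt = 1 ∧ Vtᵀ * V = 0 ∧
      (∀ (i : Fin (m - r)) (j : Fin (n - r)), (i : ℕ) ≠ (j : ℕ) → S i j = 0) ∧
      X = U * Vᵀ + Ut * S * Vtᵀ := by
  have hUY : Uᵀ * (X - U * Vᵀ) = 0 := by
    rw [Matrix.mul_sub, ← transpose_transpose (Uᵀ * X), transpose_mul, transpose_transpose, hXU,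
      ← Matrix.mul_assoc, hU, Matrix.one_mul, sub_self]
  have hYV : (X - U * Vᵀ) * V = 0 := by
    rw [Matrix.sub_mul, hXV, Matrix.mul_assoc, hV, Matrix.mul_one, sub_self]
  obtain ⟨Ut, Vt, S, hUtUt, hUtU, hVtVt, hVtV, hS, hY⟩ :=
    exists_complement_singularValueDecomposition (𝕜 := ℝ) (by simpa using hU) (by simpa using hV)
      (by simpa using hUY) hYV
  simp only [conjTranspose_eq_transpose_of_trivial] at hUtUt hUtU hVtVt hVtV hY
  exact ⟨Ut, Vt, S, hUtUt, hUtU, hVtVt, hVtV, hS, by rw [← hY, add_sub_cancel]⟩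
end

section
/- Let X ∈ ℝ^{m×n} with compact SVD X = L Σ Rᵀ, and let Z ∈ ℝ^{m×n} satisfy LᵀZ = 0 and ZR = 0 (so the column and row spaces of Z are orthogonal to those of X). Suppose ‖Z‖₂ ≤ σ_{r★}(X), where σ_{r★}(X) is the r★-th largest singular value of X. Then the best rank-r★ approximation of X − Z (in Frobenius norm) equals the best rank-r★ approximation of X; that is, Π_{rank ≤ r★}(X − Z) = Π_{rank ≤ r★}(X). -/
/-
Write `M = X - Z`. Since `Z` acts on the orthogonal complements of the column and row spaces
of `X`, Pythagoras gives `‖M‖² = ∑ σᵢ² + ‖Z‖²` and `‖X̂ - M‖² = ∑_{i ≥ r★} σᵢ² + ‖Z‖²`, where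
`X̂` is the truncated SVD. For `Y` of rank at most `r★`, an orthonormal eigenbasis `(vⱼ)` of
`Yᵀ Y` has all but `rank Y` vectors in `ker Y`, so `‖Y - M‖² ≥ ‖M‖² - ∑_{j ∈ J} ‖M vⱼ‖²` with
`#J ≤ r★`. The remaining bound is of Ky Fan type: with `τ = σ_{r★}` and `rᵢ` the columns of `R`,
a vector `w` splits as `R Rᵀ w` plus a part seen only by `Z`, whence
`‖M w‖² ≤ τ² ‖w‖² + ∑ᵢ (σᵢ² - τ²) ⟨rᵢ, w⟩²`; summed over `j ∈ J`, each weight `∑ⱼ ⟨rᵢ, vⱼ⟩²` lies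
in `[0, 1]` by Bessel, so `∑_{j ∈ J} ‖M vⱼ‖² ≤ ∑_{i < r★} σᵢ²`.
-/

open Matrix BigOperators

open Finset

section

variable {m n k r : Type*} [Fintype m] [Fintype n]

lemma sum_sq_eq_dotProduct_self (v : n → ℝ) : ∑ i, v i ^ 2 = v ⬝ᵥ v := by
  simp [dotProduct, sq]

lemma mulVec_dotProduct (A : Matrix m n ℝ) (x : n → ℝ) (y : m → ℝ) :
    (A *ᵥ x) ⬝ᵥ y = x ⬝ᵥ (Aᵀ *ᵥ y) := by
  rw [dotProduct_transpose_mulVec, dotProduct_comm]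

lemma mulVec_dotProduct_mulVec_of_transpose_mul_eq_one [DecidableEq n] {A : Matrix m n ℝ}
    (hA : Aᵀ * A = 1) (x : n → ℝ) : (A *ᵥ x) ⬝ᵥ (A *ᵥ x) = x ⬝ᵥ x := by
  rw [mulVec_dotProduct, mulVec_mulVec, hA, one_mulVec]

lemma sum_sq_eq_trace_transpose_mul (A : Matrix m n ℝ) :
    ∑ i, ∑ j, A i j ^ 2 = trace (Aᵀ * A) := by
  rw [Finset.sum_comm]
  simp [trace, mul_apply, sq]

lemma sum_sq_mul_of_mul_transpose_eq_one [Fintype k] [DecidableEq n] (A : Matrix m n ℝ)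
    {V : Matrix n k ℝ} (hV : V * Vᵀ = 1) : ∑ i, ∑ j, (A * V) i j ^ 2 = ∑ i, ∑ j, A i j ^ 2 := by
  rw [sum_sq_eq_trace_transpose_mul, sum_sq_eq_trace_transpose_mul, transpose_mul,
    Matrix.mul_assoc, trace_mul_comm, ← Matrix.mul_assoc, Matrix.mul_assoc _ V, hV,
    Matrix.mul_one, trace_mul_comm]

lemma sum_sq_add_of_transpose_mul_eq_zero {A B : Matrix m n ℝ} (h : Aᵀ * B = 0) :
    ∑ i, ∑ j, (A + B) i j ^ 2 = ∑ i, ∑ j, A i j ^ 2 + ∑ i, ∑ j, B i j ^ 2 := by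
  have hBA : Bᵀ * A = 0 := by
    rw [← transpose_transpose (Bᵀ * A), transpose_mul, transpose_transpose, h, transpose_zero]
  simp only [sum_sq_eq_trace_transpose_mul, transpose_add, Matrix.add_mul, Matrix.mul_add, h, hBA,
    add_zero, zero_add, trace_add]

lemma sum_sq_mul_diagonal_mul_transpose [Fintype r] [DecidableEq r] {L : Matrix m r ℝ}
    {R : Matrix n r ℝ} (hL : Lᵀ * L = 1) (hR : Rᵀ * R = 1) (e : r → ℝ) :
    ∑ i, ∑ j, (L * diagonal e * Rᵀ) i j ^ 2 = ∑ i, e i ^ 2 := by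
  rw [sum_sq_eq_trace_transpose_mul]
  simp only [transpose_mul, transpose_transpose, diagonal_transpose, Matrix.mul_assoc]
  rw [← Matrix.mul_assoc Lᵀ, hL, Matrix.one_mul, trace_mul_comm, Matrix.mul_assoc,
    Matrix.mul_assoc, hR, Matrix.mul_one, diagonal_mul_diagonal]
  simp [sq]

lemma sum_sq_mul_diagonal_mul_transpose_add [Fintype r] [DecidableEq r] {L : Matrix m r ℝ}
    {R : Matrix n r ℝ} {Z : Matrix m n ℝ} (hL : Lᵀ * L = 1) (hR : Rᵀ * R = 1)
    (hLZ : Lᵀ * Z = 0) (e : r → ℝ) :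
    ∑ i, ∑ j, (L * diagonal e * Rᵀ + Z) i j ^ 2 = ∑ i, e i ^ 2 + ∑ i, ∑ j, Z i j ^ 2 := by
  have h : (L * diagonal e * Rᵀ)ᵀ * Z = 0 := by
    simp only [transpose_mul, transpose_transpose, Matrix.mul_assoc, hLZ, Matrix.mul_zero]
  rw [sum_sq_add_of_transpose_mul_eq_zero h, sum_sq_mul_diagonal_mul_transpose hL hR]

lemma exists_orthogonal_mul_eq_zero_outside [DecidableEq n] (Y : Matrix m n ℝ) :
    ∃ V : Matrix n n ℝ, Vᵀ * V = 1 ∧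
      ∃ J : Finset n, #J = Y.rank ∧ ∀ i, ∀ j ∉ J, (Y * V) i j = 0 := by
  have hH := isHermitian_conjTranspose_mul_self Y
  refine ⟨hH.eigenvectorUnitary, Unitary.coe_star_mul_self hH.eigenvectorUnitary,
    univ.filter (hH.eigenvalues · ≠ 0), ?_, fun i j hj => ?_⟩
  · rw [← rank_conjTranspose_mul_self, hH.rank_eq_card_non_zero_eigs, Fintype.card_subtype]
  · have hj : hH.eigenvalues j = 0 := by simpa using hj
    have h0 : (Yᴴ * Y) *ᵥ ⇑(hH.eigenvectorBasis j) = 0 := by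
      rw [hH.mulVec_eigenvectorBasis, hj, zero_smul]
    exact congrFun ((conjTranspose_mul_self_mulVec_eq_zero _ _).mp h0) i

lemma sum_sq_le_sum_sq_sub_add_sum_sq_cols [DecidableEq n] (Y M : Matrix m n ℝ)
    {V : Matrix n n ℝ} (hV : Vᵀ * V = 1) {J : Finset n}
    (hYV : ∀ i, ∀ j ∉ J, (Y * V) i j = 0) :
    ∑ i, ∑ j, M i j ^ 2 ≤ ∑ i, ∑ j, (Y - M) i j ^ 2 + ∑ j ∈ J, ∑ i, (M * V) i j ^ 2 := by
  have hcols (A : Matrix m n ℝ) : ∑ i, ∑ j, A i j ^ 2 = ∑ j, ∑ i, (A * V) i j ^ 2 := by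
    rw [← sum_sq_mul_of_mul_transpose_eq_one A (mul_eq_one_comm.mp hV), Finset.sum_comm]
  have hout : ∑ j ∈ Jᶜ, ∑ i, ((Y - M) * V) i j ^ 2 = ∑ j ∈ Jᶜ, ∑ i, (M * V) i j ^ 2 := by
    refine sum_congr rfl fun j hj => sum_congr rfl fun i _ => ?_
    rw [Matrix.sub_mul, Matrix.sub_apply, hYV i j (mem_compl.mp hj), zero_sub, neg_sq]
  have hin : 0 ≤ ∑ j ∈ J, ∑ i, ((Y - M) * V) i j ^ 2 := by positivity
  rw [hcols M, hcols (Y - M), ← sum_add_sum_compl J, ← sum_add_sum_compl J, hout]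
  linarith

lemma sum_sq_mulVec_le [Fintype r] [DecidableEq r] {L : Matrix m r ℝ} {R : Matrix n r ℝ}
    {Z : Matrix m n ℝ} (hL : Lᵀ * L = 1) (hR : Rᵀ * R = 1) (hLZ : Lᵀ * Z = 0) (hZR : Z * R = 0)
    {τ : ℝ} (hZ : ∀ v : n → ℝ, ∑ i, (Z *ᵥ v) i ^ 2 ≤ τ ^ 2 * ∑ j, v j ^ 2) (σ : r → ℝ) (w : n → ℝ) :
    ∑ i, ((L * diagonal σ * Rᵀ - Z) *ᵥ w) i ^ 2
      ≤ τ ^ 2 * ∑ j, w j ^ 2 + ∑ i, (σ i ^ 2 - τ ^ 2) * (Rᵀ *ᵥ w) i ^ 2 := by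
  set q := Rᵀ *ᵥ w
  set u := w - R *ᵥ q
  have hsplit : (L * diagonal σ * Rᵀ - Z) *ᵥ w = L *ᵥ (diagonal σ *ᵥ q) - Z *ᵥ u := by
    rw [sub_mulVec, ← mulVec_mulVec, ← mulVec_mulVec, mulVec_sub, mulVec_mulVec _ Z R, hZR,
      zero_mulVec, sub_zero]
  have horth : (L *ᵥ (diagonal σ *ᵥ q)) ⬝ᵥ (Z *ᵥ u) = 0 := by
    rw [mulVec_dotProduct, mulVec_mulVec _ Lᵀ Z, hLZ, zero_mulVec, dotProduct_zero]
  have hu : ∑ j, u j ^ 2 = ∑ j, w j ^ 2 - ∑ i, q i ^ 2 := by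
    have hRq : (R *ᵥ q) ⬝ᵥ w = q ⬝ᵥ q := mulVec_dotProduct R q w
    simp only [sum_sq_eq_dotProduct_self, u, sub_dotProduct, dotProduct_sub,
      mulVec_dotProduct_mulVec_of_transpose_mul_eq_one hR, dotProduct_comm w, hRq]
    ring
  have hσq : (diagonal σ *ᵥ q) ⬝ᵥ (diagonal σ *ᵥ q) = ∑ i, σ i ^ 2 * q i ^ 2 := by
    simp only [dotProduct, mulVec_diagonal]
    exact sum_congr rfl fun i _ => by ring
  calc ∑ i, ((L * diagonal σ * Rᵀ - Z) *ᵥ w) i ^ 2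
      = ∑ i, σ i ^ 2 * q i ^ 2 + ∑ i, (Z *ᵥ u) i ^ 2 := by
        rw [sum_sq_eq_dotProduct_self, hsplit, sub_dotProduct, dotProduct_sub, dotProduct_sub,
          horth, dotProduct_comm (Z *ᵥ u), horth,
          mulVec_dotProduct_mulVec_of_transpose_mul_eq_one hL, hσq, sum_sq_eq_dotProduct_self]
        ring
    _ ≤ ∑ i, σ i ^ 2 * q i ^ 2 + τ ^ 2 * (∑ j, w j ^ 2 - ∑ i, q i ^ 2) := by
        rw [← hu]
        exact add_le_add_right (hZ u) _
    _ = τ ^ 2 * ∑ j, w j ^ 2 + ∑ i, (σ i ^ 2 - τ ^ 2) * q i ^ 2 := by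
        simp only [sub_mul, sum_sub_distrib, ← Finset.mul_sum]
        ring

lemma sum_mul_le_sum_of_le_one_of_nonneg [Fintype r] [DecidableEq r] (S : Finset r) {a c : r → ℝ}
    (ha : ∀ i ∈ S, 0 ≤ a i) (ha' : ∀ i ∉ S, a i ≤ 0)
    (hc : ∀ i ∈ S, c i ≤ 1) (hc' : ∀ i ∉ S, 0 ≤ c i) :
    ∑ i, a i * c i ≤ ∑ i ∈ S, a i := by
  rw [← sum_add_sum_compl S]
  have hin : ∑ i ∈ S, a i * c i ≤ ∑ i ∈ S, a i :=
    sum_le_sum fun i hi => mul_le_of_le_one_right (ha i hi) (hc i hi)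
  have hout : ∑ i ∈ Sᶜ, a i * c i ≤ 0 :=
    sum_nonpos fun i hi => mul_nonpos_of_nonpos_of_nonneg (ha' i (mem_compl.mp hi))
      (hc' i (mem_compl.mp hi))
  linarith

lemma sum_sq_transpose_mul_apply_le_one [DecidableEq n] [DecidableEq r] {R : Matrix n r ℝ}
    (hR : Rᵀ * R = 1) {V : Matrix n n ℝ} (hV : Vᵀ * V = 1) (J : Finset n) (i : r) :
    ∑ j ∈ J, (Rᵀ * V) i j ^ 2 ≤ 1 := by
  have hrow : (Rᵀ * V * (Rᵀ * V)ᵀ) i i = 1 := by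
    rw [transpose_mul, Matrix.mul_assoc, ← Matrix.mul_assoc V, mul_eq_one_comm.mp hV,
      Matrix.one_mul, transpose_transpose, hR, one_apply_eq]
  calc ∑ j ∈ J, (Rᵀ * V) i j ^ 2 ≤ ∑ j, (Rᵀ * V) i j ^ 2 :=
        sum_le_sum_of_subset_of_nonneg (subset_univ J) fun j _ _ => sq_nonneg _
    _ = 1 := by simpa only [mul_apply, transpose_apply, sq] using hrow

lemma sum_sq_mul_cols_le [Fintype r] [DecidableEq n] [DecidableEq r] {L : Matrix m r ℝ}
    {R : Matrix n r ℝ} {Z : Matrix m n ℝ} (hL : Lᵀ * L = 1) (hR : Rᵀ * R = 1) (hLZ : Lᵀ * Z = 0)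
    (hZR : Z * R = 0) {τ : ℝ} (hZ : ∀ v : n → ℝ, ∑ i, (Z *ᵥ v) i ^ 2 ≤ τ ^ 2 * ∑ j, v j ^ 2)
    {σ : r → ℝ} (S : Finset r) (hS : ∀ i ∈ S, τ ^ 2 ≤ σ i ^ 2) (hS' : ∀ i ∉ S, σ i ^ 2 ≤ τ ^ 2)
    {V : Matrix n n ℝ} (hV : Vᵀ * V = 1) (J : Finset n) (hJ : #J ≤ #S) :
    ∑ j ∈ J, ∑ i, ((L * diagonal σ * Rᵀ - Z) * V) i j ^ 2 ≤ ∑ i ∈ S, σ i ^ 2 := by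
  have hcol (j : n) : ∑ k, Vᵀ j k ^ 2 = 1 := by
    simpa [mul_apply, sq] using congrFun (congrFun hV j) j
  calc ∑ j ∈ J, ∑ i, ((L * diagonal σ * Rᵀ - Z) * V) i j ^ 2
      ≤ ∑ j ∈ J, (τ ^ 2 * 1 + ∑ i, (σ i ^ 2 - τ ^ 2) * (Rᵀ * V) i j ^ 2) := by
        refine sum_le_sum fun j _ => ?_
        have h := sum_sq_mulVec_le hL hR hLZ hZR hZ σ (Vᵀ j)
        rw [hcol] at h
        exact h
    _ = #J * τ ^ 2 + ∑ i, (σ i ^ 2 - τ ^ 2) * ∑ j ∈ J, (Rᵀ * V) i j ^ 2 := by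
        rw [sum_add_distrib, sum_comm, sum_const, nsmul_eq_mul, mul_one]
        simp only [Finset.mul_sum]
    _ ≤ #J * τ ^ 2 + ∑ i ∈ S, (σ i ^ 2 - τ ^ 2) := by
        gcongr
        exact sum_mul_le_sum_of_le_one_of_nonneg S (fun i hi => sub_nonneg.mpr (hS i hi))
          (fun i hi => sub_nonpos.mpr (hS' i hi))
          (fun i _ => sum_sq_transpose_mul_apply_le_one hR hV J i)
          (fun i _ => sum_nonneg fun j _ => sq_nonneg _)
    _ ≤ ∑ i ∈ S, σ i ^ 2 := by
        rw [sum_sub_distrib, sum_const, nsmul_eq_mul]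
        have : (#J : ℝ) ≤ #S := by exact_mod_cast hJ
        nlinarith [sq_nonneg τ]

lemma sum_sq_truncate_sub_le [Fintype r] [DecidableEq n] [DecidableEq r] {L : Matrix m r ℝ}
    {R : Matrix n r ℝ} {Z : Matrix m n ℝ} (hL : Lᵀ * L = 1) (hR : Rᵀ * R = 1)
    (hLZ : Lᵀ * Z = 0) (hZR : Z * R = 0) {τ : ℝ}
    (hZ : ∀ v : n → ℝ, ∑ i, (Z *ᵥ v) i ^ 2 ≤ τ ^ 2 * ∑ j, v j ^ 2) {σ : r → ℝ}
    (P : r → Prop) [DecidablePred P] (hP : ∀ i, P i → τ ^ 2 ≤ σ i ^ 2)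
    (hP' : ∀ i, ¬P i → σ i ^ 2 ≤ τ ^ 2) (Y : Matrix m n ℝ) (hY : Y.rank ≤ #(univ.filter P)) :
    ∑ i, ∑ j, (L * diagonal (fun i => if P i then σ i else 0) * Rᵀ
        - (L * diagonal σ * Rᵀ - Z)) i j ^ 2
      ≤ ∑ i, ∑ j, (Y - (L * diagonal σ * Rᵀ - Z)) i j ^ 2 := by
  set S := univ.filter P
  set σ' : r → ℝ := fun i => if P i then σ i else 0
  obtain ⟨V, hV, J, hJ, hYV⟩ := exists_orthogonal_mul_eq_zero_outside Y
  have hcaptured := sum_sq_mul_cols_le hL hR hLZ hZR hZ S (fun i hi => hP i (mem_filter.mp hi).2)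
    (fun i hi => hP' i fun h => hi (mem_filter.mpr ⟨mem_univ i, h⟩)) hV J (hJ ▸ hY)
  have hlower := sum_sq_le_sum_sq_sub_add_sum_sq_cols Y (L * diagonal σ * Rᵀ - Z) hV hYV
  have hM : ∑ i, ∑ j, (L * diagonal σ * Rᵀ - Z) i j ^ 2
      = ∑ i ∈ S, σ i ^ 2 + ∑ i ∈ univ.filter (¬P ·), σ i ^ 2 + ∑ i, ∑ j, Z i j ^ 2 := by
    have hLZ' : Lᵀ * -Z = 0 := by rw [Matrix.mul_neg, hLZ, neg_zero]
    rw [sum_filter_add_sum_filter_not]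
    simpa [sub_eq_add_neg] using sum_sq_mul_diagonal_mul_transpose_add hL hR hLZ' σ
  have hXhat : ∑ i, ∑ j, (L * diagonal σ' * Rᵀ - (L * diagonal σ * Rᵀ - Z)) i j ^ 2
      = ∑ i ∈ univ.filter (¬P ·), σ i ^ 2 + ∑ i, ∑ j, Z i j ^ 2 := by
    have hdiag : diagonal (σ' - σ) = diagonal σ' - diagonal σ := (diagonal_sub _ _).symm
    have hdiff : L * diagonal σ' * Rᵀ - (L * diagonal σ * Rᵀ - Z)
        = L * diagonal (σ' - σ) * Rᵀ + Z := by
      rw [hdiag, Matrix.mul_sub, Matrix.sub_mul]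
      abel
    rw [hdiff, sum_sq_mul_diagonal_mul_transpose_add hL hR hLZ, sum_filter]
    congr 1
    exact sum_congr rfl fun i _ => by by_cases h : P i <;> simp [σ', h]
  linarith

end

/-- If Z has column/row spaces orthogonal to those of X and ‖Z‖₂ ≤ σ_{r★}(X),
then the rank-r★ truncated SVD of X is a best rank-r★ approximation of X − Z. -/
theorem stmt5 {m n r : ℕ} (rs : ℕ) (hrs : 0 < rs) (hrsr : rs ≤ r)
    (L : Matrix (Fin m) (Fin r) ℝ) (R : Matrix (Fin n) (Fin r) ℝ)
    (σ : Fin r → ℝ) (X Z : Matrix (Fin m) (Fin n) ℝ)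
    (hL : Lᵀ * L = 1) (hR : Rᵀ * R = 1)
    (hσpos : ∀ i, 0 < σ i) (hσmono : ∀ i j : Fin r, i ≤ j → σ j ≤ σ i)
    (hX : X = L * Matrix.diagonal σ * Rᵀ)
    (hLZ : Lᵀ * Z = 0) (hZR : Z * R = 0)
    (hZ : ∀ v : Fin n → ℝ,
      ∑ i, (Z.mulVec v i) ^ 2 ≤ (σ ⟨rs - 1, by omega⟩) ^ 2 * ∑ j, (v j) ^ 2) :
    ∀ Y : Matrix (Fin m) (Fin n) ℝ, Y.rank ≤ rs →
      frob (L * Matrix.diagonal (fun i : Fin r => if (i : ℕ) < rs then σ i else 0) * Rᵀ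
          - (X - Z))
        ≤ frob (Y - (X - Z)) := by
  intro Y hY
  have hσsq (i j : Fin r) (hij : i ≤ j) : σ j ^ 2 ≤ σ i ^ 2 :=
    pow_le_pow_left₀ (hσpos j).le (hσmono i j hij) 2
  have hcard : #(univ.filter fun i : Fin r => (i : ℕ) < rs) = rs := by
    simp [Fin.card_filter_val_lt, hrsr]
  have h := sum_sq_truncate_sub_le hL hR hLZ hZR hZ (fun i : Fin r => (i : ℕ) < rs)
    (fun i hi => hσsq i _ (Fin.le_def.mpr (show (i : ℕ) ≤ rs - 1 by omega)))
    (fun i hi => hσsq _ i (Fin.le_def.mpr (show rs - 1 ≤ (i : ℕ) by omega))) Y (hY.trans hcard.ge)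
  rw [hX]
  exact Real.sqrt_le_sqrt h
end

section
/- Let ℓ be differentiable and consider g(A, B) = f(ABᵀ) + (λ/2)(‖A‖_F² + ‖B‖_F²) for differentiable f: ℝ^{m×n} → ℝ, A ∈ ℝ^{m×r}, B ∈ ℝ^{n×r}, λ > 0. If (A, B) is a stationary point of g (∇_A g = 0 and ∇_B g = 0), then AᵀA = BᵀB. -/
open Matrix BigOperators

/-!
Multiplying the two stationarity equations G B + λ A = 0 and Gᵀ A + λ B = 0 on the left by
Aᵀ and Bᵀ gives λ AᵀA = -AᵀGB and λ BᵀB = -BᵀGᵀA = -(AᵀGB)ᵀ. Since AᵀA is symmetric,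
transposing the first identity yields λ AᵀA = λ BᵀB, and λ ≠ 0 can be cancelled.
-/

namespace Matrix

variable {R : Type*} {k m n : Type*} [Fintype m] [Fintype n]

theorem smul_transpose_mul_self_eq_neg [CommRing R] {c : R} {A : Matrix m k R}
    {B : Matrix n k R} {G : Matrix m n R} (h : G * B + c • A = 0) :
    c • (Aᵀ * A) = -(Aᵀ * G * B) := by
  calc c • (Aᵀ * A) = Aᵀ * (c • A) := (Matrix.mul_smul Aᵀ c A).symm
    _ = Aᵀ * -(G * B) := by rw [eq_neg_of_add_eq_zero_right h]
    _ = -(Aᵀ * G * B) := by rw [Matrix.mul_neg, Matrix.mul_assoc]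

theorem transpose_mul_self_eq_of_stationary [CommRing R] [NoZeroDivisors R] {c : R} (hc : c ≠ 0)
    {A : Matrix m k R} {B : Matrix n k R} {G : Matrix m n R}
    (hA : G * B + c • A = 0) (hB : Gᵀ * A + c • B = 0) :
    Aᵀ * A = Bᵀ * B := by
  have hAA := smul_transpose_mul_self_eq_neg hA
  have hBB := smul_transpose_mul_self_eq_neg hB
  have hsymm : (Aᵀ * A)ᵀ = Aᵀ * A := by rw [transpose_mul, transpose_transpose]
  have key : c • (Aᵀ * A) = c • (Bᵀ * B) :=
    calc c • (Aᵀ * A) = (c • (Aᵀ * A))ᵀ := by rw [transpose_smul, hsymm]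
      _ = c • (Bᵀ * B) := by
        rw [hAA, hBB, transpose_neg, transpose_mul, transpose_mul, transpose_transpose,
          Matrix.mul_assoc]
  ext i j
  exact mul_left_cancel₀ hc (congrFun₂ key i j)

end Matrix

/-- Stationarity of g(A,B) = f(ABᵀ) + (λ/2)(‖A‖² + ‖B‖²) is expressed via the gradient G of f at
ABᵀ: ∇_A g = G·B + λA = 0 and ∇_B g = Gᵀ·A + λB = 0. -/
theorem stmt18_general {m n r : ℕ} (lam : ℝ) (hlam : 0 < lam)
    (A : Matrix (Fin m) (Fin r) ℝ) (B : Matrix (Fin n) (Fin r) ℝ)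
    (G : Matrix (Fin m) (Fin n) ℝ)
    (h1 : G * B + lam • A = 0)
    (h2 : Gᵀ * A + lam • B = 0) :
    Aᵀ * A = Bᵀ * B :=
  transpose_mul_self_eq_of_stationary hlam.ne' h1 h2

/-- At a stationary point of g(A,B) = f(ABᵀ) + (λ/2)(‖A‖² + ‖B‖²) with λ > 0,
one has AᵀA = BᵀB. Stationarity is expressed via the gradient G of f at ABᵀ:
∇_A g = G·B + λA = 0 and ∇_B g = Gᵀ·A + λB = 0. -/
theorem stmt18 {m n r : ℕ} (lam : ℝ) (hlam : 0 < lam)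
    (f : Matrix (Fin m) (Fin n) ℝ → ℝ)
    (A : Matrix (Fin m) (Fin r) ℝ) (B : Matrix (Fin n) (Fin r) ℝ)
    (G : Matrix (Fin m) (Fin n) ℝ)
    (hG : ∀ H : Matrix (Fin m) (Fin n) ℝ,
      HasDerivAt (fun t : ℝ => f (A * Bᵀ + t • H)) (mip G H) 0)
    (h1 : G * B + lam • A = 0)
    (h2 : Gᵀ * A + lam • B = 0) :
    Aᵀ * A = Bᵀ * B :=
  stmt18_general lam hlam A B G h1 h2
end
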